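/- arXiv:1809.04396 — 2 statements merged into one kernel-verified Lean document; each statement's English description precedes it below -/
import Mathlib

section
/- Let G = (V, E, w) be a weighted hypergraph with positive degrees, let x₁, x₂ ∈ ℝ^V and set x̄ᵢ = D⁻¹xᵢ. For i = 1, 2 choose, for each hyperedge e, a vector b_e^{(i)} ∈ argmax_{b ∈ B_e} bᵀx̄ᵢ, and set yᵢ = ∑_{e ∈ E} w(e) ((b_e^{(i)})ᵀ x̄ᵢ) b_e^{(i)} ∈ 𝓛_G(xᵢ). Then ⟨y₁ − y₂, x₁ − x₂⟩_{D⁻¹} ≥ ∑_{e ∈ E} w(e) ((b_e^{(1)})ᵀ x̄₁ − (b_e^{(2)})ᵀ x̄₂)². -/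
open Finset
open scoped Classical

structure WHG (V : Type) [Fintype V] [DecidableEq V] where
  E : Type
  [fintypeE : Fintype E]
  mem : E → Finset V
  mem_nonempty : ∀ e, (mem e).Nonempty
  w : E → ℝ
  w_pos : ∀ e, 0 < w e

namespace WHG

attribute [instance] WHG.fintypeE

variable {V : Type} [Fintype V] [DecidableEq V] (G : WHG V)

/-- Degree of a vertex. -/
noncomputable def deg (v : V) : ℝ := ∑ e : G.E, if v ∈ G.mem e then G.w e else 0

/-- Volume of a vertex set. -/
noncomputable def vol (S : Finset V) : ℝ := ∑ v ∈ S, G.deg v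

/-- Euclidean dot product. -/
def dot (x y : V → ℝ) : ℝ := ∑ v, x v * y v

/-- Inner product weighted by `D⁻¹`. -/
noncomputable def innerD (x y : V → ℝ) : ℝ := ∑ v, x v * y v / G.deg v

/-- Norm associated to `innerD`. -/
noncomputable def normD (x : V → ℝ) : ℝ := Real.sqrt (G.innerD x x)

/-- `D⁻¹ x`. -/
noncomputable def Dinv (x : V → ℝ) : V → ℝ := fun v => x v / G.deg v

/-- Base polytope `B_e`. -/
def base (e : G.E) : Set (V → ℝ) :=
  convexHull ℝ {b : V → ℝ | ∃ u ∈ G.mem e, ∃ v ∈ G.mem e, b = Pi.single u 1 - Pi.single v 1}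

/-- Multi-valued hypergraph Laplacian `L_G`. -/
def Lap (x : V → ℝ) : Set (V → ℝ) :=
  {y | ∃ b : G.E → V → ℝ,
    (∀ e, b e ∈ G.base e ∧ ∀ b' ∈ G.base e, dot b' x ≤ dot (b e) x) ∧
    y = ∑ e : G.E, (G.w e * dot (b e) x) • b e}

/-- Normalized Laplacian `𝓛_G`. -/
noncomputable def nLap (x : V → ℝ) : Set (V → ℝ) := G.Lap (G.Dinv x)

/-- Total weight of hyperedges crossing `S`. -/
noncomputable def cut (S : Finset V) : ℝ :=
  ∑ e : G.E, if (G.mem e ∩ S).Nonempty ∧ (G.mem e \ S).Nonempty then G.w e else 0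

/-- Conductance of a vertex set. -/
noncomputable def cond (S : Finset V) : ℝ := G.cut S / min (G.vol S) (G.vol Sᶜ)

/-- Conductance of the hypergraph. -/
noncomputable def condG : ℝ :=
  sInf {c | ∃ S : Finset V, S.Nonempty ∧ S ≠ Finset.univ ∧ c = G.cond S}

/-- Connectivity of a hypergraph. -/
def Connected : Prop :=
  ∀ S : Finset V, S.Nonempty → S ≠ Finset.univ →
    ∃ e : G.E, (G.mem e ∩ S).Nonempty ∧ (G.mem e \ S).Nonempty

/-- The stationary vector `π`. -/
noncomputable def piVec : V → ℝ := fun v => G.deg v / G.vol Finset.univ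

/-- Solution of the heat equation `(HE; s)`. -/
def IsHeatSol (s : V → ℝ) (ρ : ℝ → V → ℝ) : Prop :=
  (∃ K : NNReal, LipschitzOnWith K ρ (Set.Ici 0)) ∧ ρ 0 = s ∧
  (∀ᵐ t : ℝ ∂MeasureTheory.volume, 0 ≤ t → ∃ y ∈ G.nLap (ρ t), HasDerivAt ρ (-y) t)

/-- Sweep sets of a vector. -/
def sweep (x : V → ℝ) : Set (Finset V) :=
  {S | ∃ τ : ℝ, S = Finset.univ.filter (fun v => τ ≤ x v) ∨
                S = Finset.univ.filter (fun v => x v ≤ τ)}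

/-- `κ_{T,t}`: the least conductance of nontrivial sweep sets of `ρ_ξ`, `ξ ∈ [T,t]`. -/
noncomputable def kappa (ρ : ℝ → V → ℝ) (T t : ℝ) : ℝ :=
  sInf {c | ∃ ξ ∈ Set.Icc T t, ∃ S ∈ sweep (ρ ξ),
    S.Nonempty ∧ S ≠ Finset.univ ∧ c = G.cond S}

/-- The family `𝒢(G, x)` of collapsed weighted graphs. -/
def GraphFamily (x : V → ℝ) (A : Matrix V V ℝ) : Prop :=
  A.IsSymm ∧ (∀ u v, 0 ≤ A u v) ∧ (∀ v, ∑ u, A v u = G.deg v) ∧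
  ∃ w' : G.E → V → V → ℝ,
    (∀ e u v, 0 ≤ w' e u v) ∧
    (∀ e u v, w' e u v ≠ 0 →
      (u ∈ G.mem e ∧ ∀ u' ∈ G.mem e, x u' ≤ x u) ∧
      (v ∈ G.mem e ∧ ∀ v' ∈ G.mem e, x v ≤ x v')) ∧
    (∀ e, ∑ u : V, ∑ v : V, w' e u v = G.w e) ∧
    (∀ u v, u ≠ v → A u v = ∑ e : G.E, (w' e u v + w' e v u))

/-! Each `b_e^{(i)}` maximises a linear functional over `B_e ∋ 0`, so `aᵢ := (b_e^{(i)})ᵀ x̄ᵢ ≥ 0`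
and each maximiser does at least as well as the other one. Hence, edge by edge,
`(a₁ - a₂)² ≤ a₁ (b_e^{(1)})ᵀ(x̄₁ - x̄₂) - a₂ (b_e^{(2)})ᵀ(x̄₁ - x̄₂)`, and the `w`-weighted sum
of the right-hand sides is `⟨y₁ - y₂, x₁ - x₂⟩_{D⁻¹}`. -/

omit [DecidableEq V] in
theorem dot_eq_dotProduct (x y : V → ℝ) : dot x y = x ⬝ᵥ y := rfl

omit [DecidableEq V] in
theorem dot_sub_left (x y z : V → ℝ) : dot (x - y) z = dot x z - dot y z :=
  sub_dotProduct x y z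

omit [DecidableEq V] in
theorem dot_sub_right (x y z : V → ℝ) : dot x (y - z) = dot x y - dot x z :=
  dotProduct_sub x y z

theorem zero_mem_base (e : G.E) : (0 : V → ℝ) ∈ G.base e := by
  obtain ⟨u, hu⟩ := G.mem_nonempty e
  exact subset_convexHull ℝ _ ⟨u, hu, u, hu, by simp⟩

theorem innerD_eq_dot_Dinv (x y : V → ℝ) : G.innerD x y = dot x (G.Dinv y) := by
  simp only [innerD, dot, Dinv, mul_div_assoc]

theorem Dinv_sub (x y : V → ℝ) : G.Dinv (x - y) = G.Dinv x - G.Dinv y := by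
  funext v
  simp only [Dinv, Pi.sub_apply, sub_div]

omit [DecidableEq V] in
theorem dot_sum_smul_dot {ι : Type} [Fintype ι] (c : ι → ℝ) (b : ι → V → ℝ) (z u : V → ℝ) :
    dot (∑ i, (c i * dot (b i) z) • b i) u = ∑ i, c i * dot (b i) z * dot (b i) u := by
  simp only [dot_eq_dotProduct, sum_dotProduct, smul_dotProduct, smul_eq_mul]

omit [DecidableEq V] in
theorem sq_dot_sub_le_of_isMax {S : Set (V → ℝ)} (hS : 0 ∈ S) {b₁ b₂ z₁ z₂ : V → ℝ}
    (hb₁ : b₁ ∈ S ∧ ∀ b' ∈ S, dot b' z₁ ≤ dot b₁ z₁)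
    (hb₂ : b₂ ∈ S ∧ ∀ b' ∈ S, dot b' z₂ ≤ dot b₂ z₂) :
    (dot b₁ z₁ - dot b₂ z₂) ^ 2
      ≤ dot b₁ z₁ * dot b₁ (z₁ - z₂) - dot b₂ z₂ * dot b₂ (z₁ - z₂) := by
  have h₁ : 0 ≤ dot b₁ z₁ := by simpa only [dot_eq_dotProduct, zero_dotProduct] using hb₁.2 0 hS
  have h₂ : 0 ≤ dot b₂ z₂ := by simpa only [dot_eq_dotProduct, zero_dotProduct] using hb₂.2 0 hS
  have h₁₂ := hb₂.2 b₁ hb₁.1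
  have h₂₁ := hb₁.2 b₂ hb₂.1
  rw [dot_sub_right, dot_sub_right]
  nlinarith [mul_nonneg h₁ (sub_nonneg.2 h₁₂), mul_nonneg h₂ (sub_nonneg.2 h₂₁)]

theorem nLap_strong_monotone_general {V : Type} [Fintype V] [DecidableEq V] (G : WHG V)
    (x₁ x₂ : V → ℝ) (b₁ b₂ : G.E → V → ℝ)
    (hb₁ : ∀ e, b₁ e ∈ G.base e ∧ ∀ b' ∈ G.base e, dot b' (G.Dinv x₁) ≤ dot (b₁ e) (G.Dinv x₁))
    (hb₂ : ∀ e, b₂ e ∈ G.base e ∧ ∀ b' ∈ G.base e, dot b' (G.Dinv x₂) ≤ dot (b₂ e) (G.Dinv x₂))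
    (y₁ y₂ : V → ℝ)
    (hy₁ : y₁ = ∑ e : G.E, (G.w e * dot (b₁ e) (G.Dinv x₁)) • b₁ e)
    (hy₂ : y₂ = ∑ e : G.E, (G.w e * dot (b₂ e) (G.Dinv x₂)) • b₂ e) :
    ∑ e : G.E, G.w e * (dot (b₁ e) (G.Dinv x₁) - dot (b₂ e) (G.Dinv x₂)) ^ 2
      ≤ G.innerD (y₁ - y₂) (x₁ - x₂) := by
  rw [innerD_eq_dot_Dinv, dot_sub_left, hy₁, hy₂, dot_sum_smul_dot, dot_sum_smul_dot,
    ← sum_sub_distrib, G.Dinv_sub]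
  refine sum_le_sum fun e _ => ?_
  calc G.w e * (dot (b₁ e) (G.Dinv x₁) - dot (b₂ e) (G.Dinv x₂)) ^ 2
      ≤ G.w e * (dot (b₁ e) (G.Dinv x₁) * dot (b₁ e) (G.Dinv x₁ - G.Dinv x₂)
          - dot (b₂ e) (G.Dinv x₂) * dot (b₂ e) (G.Dinv x₁ - G.Dinv x₂)) :=
        mul_le_mul_of_nonneg_left (sq_dot_sub_le_of_isMax (G.zero_mem_base e) (hb₁ e) (hb₂ e))
          (G.w_pos e).le
    _ = _ := by ring

/-- quantitative monotonicity of the normalized Laplacian. -/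
theorem nLap_strong_monotone {V : Type} [Fintype V] [DecidableEq V] (G : WHG V)
    (hd : ∀ v, 0 < G.deg v) (x₁ x₂ : V → ℝ) (b₁ b₂ : G.E → V → ℝ)
    (hb₁ : ∀ e, b₁ e ∈ G.base e ∧ ∀ b' ∈ G.base e, dot b' (G.Dinv x₁) ≤ dot (b₁ e) (G.Dinv x₁))
    (hb₂ : ∀ e, b₂ e ∈ G.base e ∧ ∀ b' ∈ G.base e, dot b' (G.Dinv x₂) ≤ dot (b₂ e) (G.Dinv x₂))
    (y₁ y₂ : V → ℝ)
    (hy₁ : y₁ = ∑ e : G.E, (G.w e * dot (b₁ e) (G.Dinv x₁)) • b₁ e)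
    (hy₂ : y₂ = ∑ e : G.E, (G.w e * dot (b₂ e) (G.Dinv x₂)) • b₂ e) :
    ∑ e : G.E, G.w e * (dot (b₁ e) (G.Dinv x₁) - dot (b₂ e) (G.Dinv x₂)) ^ 2
      ≤ G.innerD (y₁ - y₂) (x₁ - x₂) :=
  nLap_strong_monotone_general G x₁ x₂ b₁ b₂ hb₁ hb₂ y₁ y₂ hy₁ hy₂

end WHG
end

section
/- Let H be a weighted graph on a finite vertex set V with positive degrees, let s ∈ ℝ^V with ∑_{v ∈ V} s(v) = 1, and define f(Δ) = sᵀ D⁻¹ (e^{−Δ𝓛} s − π). Let Δ ≥ 0 with f(Δ) > 0, set μ = D⁻¹ e^{−(Δ/2)𝓛} s, and let κ = min { φ_H(S) : S ∈ sweep(μ), ∅ ⊊ S ⊊ V } be the minimum conductance of a nontrivial sweep set of μ. Then the derivative of Δ ↦ log f(Δ) at Δ satisfies −(d/dΔ) log f(Δ) ≥ κ²/2. -/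
/-!
Write `g = s − π`, `q = e^{−(Δ/2)𝓛} g` and `b = 1 / vol V`. Because `𝓛π = 0`, `1ᵀ𝓛 = 0` and
`D⁻¹𝓛` is symmetric, the semigroup gives `f(Δ) = gᵀ D⁻¹ e^{−Δ𝓛} g = qᵀ D⁻¹ q` and
`f'(Δ) = −qᵀ D⁻¹ 𝓛 q`. Since `D⁻¹ q = μ − b`, these are `f = ∑ d(v) (μ(v) − b)²` and
`−f' = ½ ∑_{u,v} A(u,v) (μ(u) − μ(v))²`, so `−(log f)'` is a Rayleigh quotient of `μ − b`, a
vector of `D`-weighted mean zero.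

The bound is then Cheeger's inequality with only sweep sets of `μ` in play. Moving `b` to a
weighted median `c` only increases the denominator; the level sets of `(μ − c)⁺` and `(μ − c)⁻`
are sweep sets of `μ` of volume at most `vol V / 2`, so the coarea formula bounds
`κ ∑ d ψ²` by `∑ A |ψ(u)² − ψ(v)²| / 2` for both parts `ψ`, and Cauchy–Schwarz turns this into
`κ² ∑ d ψ² ≤ ∑ A (ψ(u) − ψ(v))²`.
-/

open Finset
open scoped Classical

namespace GraphHeat

variable {V : Type} [Fintype V] [DecidableEq V]

/-- Degree in a weighted graph given by its adjacency matrix. -/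
noncomputable def deg (A : Matrix V V ℝ) (v : V) : ℝ := ∑ u, A v u

/-- Normalized Laplacian `𝓛 = I − A D⁻¹`. -/
noncomputable def nlap (A : Matrix V V ℝ) : Matrix V V ℝ :=
  1 - A * Matrix.diagonal (fun v => (deg A v)⁻¹)

/-- The heat semigroup `e^{−Δ𝓛} s`. -/
noncomputable def heat (A : Matrix V V ℝ) (Δ : ℝ) (s : V → ℝ) : V → ℝ :=
  (NormedSpace.exp (-(Δ • nlap A))).mulVec s

/-- Stationary vector `π`. -/
noncomputable def piV (A : Matrix V V ℝ) : V → ℝ := fun v => deg A v / ∑ u, deg A u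

end GraphHeat

namespace Matrix

variable {n : Type*} [Fintype n] [DecidableEq n]

open NormedSpace

theorem exp_mulVec_eq_self {M : Matrix n n ℝ} {x : n → ℝ} (h : M *ᵥ x = 0) :
    exp M *ᵥ x = x := by
  have hX : SemiconjBy (replicateCol n x) 0 M := by
    ext i j
    simpa [mul_apply, mulVec, dotProduct] using (congrFun h i).symm
  have hexp : replicateCol n x = exp M * replicateCol n x := by
    open scoped Matrix.Norms.Operator in
    have h := hX.exp_right
    rw [SemiconjBy, exp_zero, mul_one] at h
    exact h
  funext i
  simpa [mul_apply, mulVec, dotProduct] using (congrFun₂ hexp i i).symm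

theorem vecMul_exp_eq_self {M : Matrix n n ℝ} {x : n → ℝ} (h : x ᵥ* M = 0) :
    x ᵥ* exp M = x := by
  rw [← mulVec_transpose, ← exp_transpose, exp_mulVec_eq_self (by rwa [mulVec_transpose])]

theorem mul_exp_eq_exp_transpose_mul {W M : Matrix n n ℝ} (h : W * M = Mᵀ * W) :
    W * exp M = (exp M)ᵀ * W := by
  rw [← exp_transpose]
  open scoped Matrix.Norms.Operator in
  exact SemiconjBy.exp_right h

theorem hasDerivAt_exp_smul_mulVec (M : Matrix n n ℝ) (x : n → ℝ) (t : ℝ) :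
    HasDerivAt (fun t : ℝ => exp (t • M) *ᵥ x) (exp (t • M) *ᵥ (M *ᵥ x)) t := by
  open scoped Matrix.Norms.Operator in
  have := (LinearMap.applyₗ x ∘ₗ toLin'.toLinearMap).toContinuousLinearMap.hasFDerivAt
    |>.comp_hasDerivAt t (hasDerivAt_exp_smul_const M t)
  rw [mulVec_mulVec]
  exact this

end Matrix

theorem exists_weighted_median {ι : Type*} [Fintype ι] (w x : ι → ℝ) (hw : ∀ i, 0 ≤ w i) :
    ∃ c, 2 * ∑ i ∈ univ.filter (fun i => c < x i), w i ≤ ∑ i, w i ∧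
      2 * ∑ i ∈ univ.filter (fun i => x i < c), w i ≤ ∑ i, w i := by
  rcases isEmpty_or_nonempty ι with hι | hι
  · exact ⟨0, by simp [univ_eq_empty]⟩
  let IsUpper : ι → Prop := fun j => ∑ i, w i ≤ 2 * ∑ i ∈ univ.filter (fun i => x i ≤ x j), w i
  obtain ⟨jmax, -, hjmax⟩ := exists_max_image univ x univ_nonempty
  have hupper : (univ.filter IsUpper).Nonempty :=
    ⟨jmax, mem_filter.2 ⟨mem_univ _, by
      show _ ≤ _
      rw [filter_true_of_mem fun i _ => hjmax i (mem_univ i)]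
      linarith [sum_nonneg fun i (_ : i ∈ univ) => hw i]⟩⟩
  -- the median is the least value of `x` whose lower tail carries half of the weight
  obtain ⟨j₀, hj₀, hmin⟩ := exists_min_image _ x hupper
  refine ⟨x j₀, ?_, ?_⟩
  · have := sum_filter_add_sum_filter_not univ (fun i => x i ≤ x j₀) w
    simp only [not_le] at this
    linarith [(mem_filter.1 hj₀).2]
  · rcases (univ.filter fun i => x i < x j₀).eq_empty_or_nonempty with hempty | hne
    · simp [hempty, sum_nonneg fun i (_ : i ∈ univ) => hw i]
    obtain ⟨j₁, hj₁, hmax⟩ := exists_max_image _ x hne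
    have hlt : x j₁ < x j₀ := (mem_filter.1 hj₁).2
    have hnot : ¬ IsUpper j₁ := fun h => (hmin j₁ (mem_filter.2 ⟨mem_univ _, h⟩)).not_gt hlt
    have hsub : univ.filter (fun i => x i < x j₀) ⊆ univ.filter (fun i => x i ≤ x j₁) :=
      fun i hi => mem_filter.2 ⟨mem_univ _, hmax i hi⟩
    have := sum_le_sum_of_subset_of_nonneg hsub fun i _ _ => hw i
    simp only [IsUpper, not_le] at hnot
    linarith

theorem sq_max_add_sq_max_neg (a : ℝ) : max a 0 ^ 2 + max (-a) 0 ^ 2 = a ^ 2 := by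
  rcases le_total a 0 with ha | ha <;> simp [ha]

theorem sq_max_sub_max_add_sq_max_sub_max_le (a b : ℝ) :
    (max a 0 - max b 0) ^ 2 + (max (-a) 0 - max (-b) 0) ^ 2 ≤ (a - b) ^ 2 := by
  rcases le_total a 0 with ha | ha <;> rcases le_total b 0 with hb | hb <;>
    simp only [max_eq_left, max_eq_right, ha, hb, neg_nonneg, neg_nonpos] <;> nlinarith

theorem le_sq_max_iff {t y : ℝ} (ht : 0 < t) : t ≤ max y 0 ^ 2 ↔ √t ≤ y := by
  rw [← Real.sqrt_le_left (le_max_right y 0), le_max_iff, or_iff_left (Real.sqrt_pos.2 ht).not_ge]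

section LayerCake

open MeasureTheory

theorem setIntegral_Ioi_indicator_Ioc {a b : ℝ} (hb : 0 ≤ b) (c : ℝ) :
    ∫ t in Set.Ioi 0, (Set.Ioc b a).indicator (fun _ => c) t = max (a - b) 0 * c := by
  rw [setIntegral_indicator measurableSet_Ioc,
    Set.inter_eq_right.2 (Set.Ioc_subset_Ioi_self.trans (Set.Ioi_subset_Ioi hb)),
    setIntegral_const, Real.volume_real_Ioc, smul_eq_mul]

theorem integrableOn_indicator_Ioc (a b c : ℝ) :
    IntegrableOn ((Set.Ioc b a).indicator fun _ => c) (Set.Ioi 0) :=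
  ((integrable_indicator_iff measurableSet_Ioc).2
    (integrableOn_const measure_Ioc_lt_top.ne)).integrableOn

end LayerCake

namespace GraphHeat

open Matrix

section Degrees

variable {V : Type} [Fintype V] {A : Matrix V V ℝ}

theorem deg_nonneg (hnn : ∀ u v, 0 ≤ A u v) (v : V) : 0 ≤ deg A v :=
  sum_nonneg fun u _ => hnn v u

theorem sum_apply_eq_deg (hsym : A.IsSymm) (v : V) : ∑ u, A u v = deg A v :=
  sum_congr rfl fun u _ => hsym.apply v u

theorem mulVec_one_eq_deg : A *ᵥ 1 = deg A := by
  funext v; simp [mulVec, dotProduct, deg]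

theorem one_vecMul_eq_deg (hsym : A.IsSymm) : 1 ᵥ* A = deg A := by
  rw [← mulVec_transpose, hsym.eq, mulVec_one_eq_deg]

theorem sum_piV (hd : ∀ v, 0 < deg A v) [Nonempty V] : ∑ v, piV A v = 1 := by
  simp only [piV, ← sum_div]
  exact div_self (sum_pos (fun v _ => hd v) univ_nonempty).ne'

theorem sum_sum_mul_left (x : V → ℝ) : ∑ u, ∑ v, A u v * x u = ∑ v, deg A v * x v := by
  simp only [← sum_mul, deg]

theorem sum_sum_mul_right (hsym : A.IsSymm) (x : V → ℝ) :
    ∑ u, ∑ v, A u v * x v = ∑ v, deg A v * x v := by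
  rw [sum_comm]; simp only [← sum_mul, sum_apply_eq_deg hsym]

theorem sum_mul_sub_sq (hsym : A.IsSymm) (x : V → ℝ) :
    ∑ u, ∑ v, A u v * (x u - x v) ^ 2 = 2 * (∑ v, deg A v * x v ^ 2 - x ⬝ᵥ A *ᵥ x) := by
  have hcross : ∑ u, ∑ v, A u v * (x u * x v) = x ⬝ᵥ A *ᵥ x := by
    simp only [dotProduct, mulVec, mul_sum]
    exact sum_congr rfl fun u _ => sum_congr rfl fun v _ => by ring
  have hexpand : ∀ u v, A u v * (x u - x v) ^ 2
      = A u v * x u ^ 2 + A u v * x v ^ 2 - 2 * (A u v * (x u * x v)) := fun u v => by ring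
  simp only [hexpand, sum_sub_distrib, sum_add_distrib, ← mul_sum, sum_sum_mul_left,
    sum_sum_mul_right hsym, hcross]
  ring

theorem two_mul_sum_max_sub (hsym : A.IsSymm) (a : V → ℝ) :
    2 * ∑ u, ∑ v, A u v * max (a u - a v) 0 = ∑ u, ∑ v, A u v * |a u - a v| := by
  have hswap : ∑ u, ∑ v, A u v * max (a u - a v) 0
      = ∑ u, ∑ v, A u v * max (-(a u - a v)) 0 := by
    rw [sum_comm]
    refine sum_congr rfl fun u _ => sum_congr rfl fun v _ => ?_
    rw [hsym.apply u v, neg_sub]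
  rw [two_mul]
  nth_rw 2 [hswap]
  simp only [← sum_add_distrib, ← mul_add, max_zero_add_max_neg_zero_eq_abs_self]

theorem sq_sum_sum_le_mul (hnn : ∀ u v, 0 ≤ A u v) (r f g : V → V → ℝ)
    (hf : ∀ u v, 0 ≤ f u v) (hg : ∀ u v, 0 ≤ g u v) (hr : ∀ u v, r u v ^ 2 ≤ f u v * g u v) :
    (∑ u, ∑ v, A u v * r u v) ^ 2 ≤ (∑ u, ∑ v, A u v * f u v) * ∑ u, ∑ v, A u v * g u v := by
  simp only [← Fintype.sum_prod_type']
  refine sum_sq_le_sum_mul_sum_of_sq_le_mul _ (fun p _ => mul_nonneg (hnn _ _) (hf _ _))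
    (fun p _ => mul_nonneg (hnn _ _) (hg _ _)) fun p _ => ?_
  rw [mul_pow, mul_mul_mul_comm, ← sq]
  exact mul_le_mul_of_nonneg_left (hr _ _) (sq_nonneg _)

end Degrees

section HeatSemigroup

variable {V : Type} [Fintype V] [DecidableEq V]

noncomputable def invDeg (A : Matrix V V ℝ) : Matrix V V ℝ := diagonal fun v => (deg A v)⁻¹

noncomputable def heatOp (A : Matrix V V ℝ) (t : ℝ) : Matrix V V ℝ :=
  NormedSpace.exp (-(t • nlap A))

noncomputable def heatDensity (A : Matrix V V ℝ) (t : ℝ) (s : V → ℝ) : V → ℝ :=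
  fun v => heat A t s v / deg A v

noncomputable def heatGap (A : Matrix V V ℝ) (s : V → ℝ) (t : ℝ) : ℝ :=
  ∑ v, s v * (heat A t s v - piV A v) / deg A v

variable {A : Matrix V V ℝ}

theorem invDeg_mulVec_deg (hd : ∀ v, 0 < deg A v) : invDeg A *ᵥ deg A = 1 := by
  funext v; simp [invDeg, mulVec_diagonal, (hd v).ne']

theorem nlap_mulVec_piV (hd : ∀ v, 0 < deg A v) : nlap A *ᵥ piV A = 0 := by
  have hπ : piV A = (∑ u, deg A u)⁻¹ • deg A := by
    funext v; simp [piV, div_eq_inv_mul]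
  rw [hπ, nlap, sub_mulVec, one_mulVec, ← mulVec_mulVec, mulVec_smul, mulVec_smul, ← invDeg,
    invDeg_mulVec_deg hd, mulVec_one_eq_deg, sub_self]

theorem one_vecMul_nlap (hsym : A.IsSymm) (hd : ∀ v, 0 < deg A v) : 1 ᵥ* nlap A = 0 := by
  rw [nlap, vecMul_sub, vecMul_one, ← vecMul_vecMul, one_vecMul_eq_deg hsym, ← invDeg,
    ← mulVec_transpose, invDeg, diagonal_transpose, ← invDeg, invDeg_mulVec_deg hd, sub_self]

theorem invDeg_mul_nlap (hsym : A.IsSymm) : invDeg A * nlap A = (nlap A)ᵀ * invDeg A := by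
  rw [nlap, ← invDeg, transpose_sub, transpose_one, transpose_mul, invDeg, diagonal_transpose,
    hsym.eq, mul_sub, sub_mul, mul_one, one_mul, mul_assoc]

theorem heatOp_mulVec_piV (hd : ∀ v, 0 < deg A v) (t : ℝ) : heatOp A t *ᵥ piV A = piV A :=
  exp_mulVec_eq_self (by rw [neg_mulVec, smul_mulVec, nlap_mulVec_piV hd, smul_zero, neg_zero])

theorem one_vecMul_heatOp (hsym : A.IsSymm) (hd : ∀ v, 0 < deg A v) (t : ℝ) :
    1 ᵥ* heatOp A t = 1 :=
  vecMul_exp_eq_self (by rw [vecMul_neg, vecMul_smul, one_vecMul_nlap hsym hd, smul_zero, neg_zero])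

theorem sum_heatOp_mulVec (hsym : A.IsSymm) (hd : ∀ v, 0 < deg A v) (t : ℝ) (y : V → ℝ) :
    ∑ v, (heatOp A t *ᵥ y) v = ∑ v, y v := by
  rw [← one_dotProduct, dotProduct_mulVec, one_vecMul_heatOp hsym hd, one_dotProduct]

theorem invDeg_mul_heatOp (hsym : A.IsSymm) (t : ℝ) :
    invDeg A * heatOp A t = (heatOp A t)ᵀ * invDeg A :=
  mul_exp_eq_exp_transpose_mul (by
    rw [transpose_neg, transpose_smul, mul_neg, neg_mul, mul_smul_comm, smul_mul,
      invDeg_mul_nlap hsym])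

theorem heatOp_eq_half_mul_half (t : ℝ) : heatOp A t = heatOp A (t / 2) * heatOp A (t / 2) := by
  rw [heatOp, heatOp, ← Matrix.exp_add_of_commute _ _ (Commute.refl _), ← neg_add, ← add_smul,
    add_halves]

theorem heatOp_commute_nlap (t : ℝ) : Commute (heatOp A t) (nlap A) :=
  (((Commute.refl (nlap A)).smul_left t).neg_left).exp_left

theorem dotProduct_invDeg_mulVec (x y : V → ℝ) :
    x ⬝ᵥ invDeg A *ᵥ y = ∑ v, x v * y v / deg A v := by
  simp only [dotProduct, invDeg, mulVec_diagonal]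
  exact sum_congr rfl fun v _ => by ring

theorem dotProduct_invDeg_comm (x y : V → ℝ) :
    x ⬝ᵥ invDeg A *ᵥ y = invDeg A *ᵥ x ⬝ᵥ y := by
  rw [dotProduct_mulVec, ← mulVec_transpose, invDeg, diagonal_transpose]

theorem piV_dotProduct_invDeg_mulVec (hd : ∀ v, 0 < deg A v) (y : V → ℝ) :
    piV A ⬝ᵥ invDeg A *ᵥ y = (∑ v, y v) / ∑ u, deg A u := by
  rw [dotProduct_invDeg_mulVec, sum_div]
  exact sum_congr rfl fun v _ => by simp only [piV]; field_simp [(hd v).ne']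

theorem dotProduct_invDeg_self (hd : ∀ v, 0 < deg A v) (q : V → ℝ) :
    q ⬝ᵥ invDeg A *ᵥ q = ∑ v, deg A v * (invDeg A *ᵥ q) v ^ 2 := by
  simp only [dotProduct, invDeg, mulVec_diagonal]
  exact sum_congr rfl fun v _ => by field_simp [(hd v).ne']

theorem dotProduct_invDeg_nlap (hsym : A.IsSymm) (hd : ∀ v, 0 < deg A v) (q : V → ℝ) :
    q ⬝ᵥ invDeg A *ᵥ (nlap A *ᵥ q)
      = (∑ u, ∑ v, A u v * ((invDeg A *ᵥ q) u - (invDeg A *ᵥ q) v) ^ 2) / 2 := by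
  rw [sum_mul_sub_sq hsym, nlap, ← invDeg, sub_mulVec, one_mulVec, ← mulVec_mulVec, mulVec_sub,
    dotProduct_sub, dotProduct_invDeg_self hd, dotProduct_invDeg_comm q (A *ᵥ _)]
  ring

theorem dotProduct_invDeg_heatOp_mulVec (hsym : A.IsSymm) (hd : ∀ v, 0 < deg A v)
    (s y : V → ℝ) (hy : ∑ v, y v = 0) (t : ℝ) :
    s ⬝ᵥ invDeg A *ᵥ (heatOp A t *ᵥ y)
      = heatOp A (t / 2) *ᵥ (s - piV A) ⬝ᵥ invDeg A *ᵥ (heatOp A (t / 2) *ᵥ y) := by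
  have hπ : piV A ⬝ᵥ invDeg A *ᵥ (heatOp A t *ᵥ y) = 0 := by
    rw [piV_dotProduct_invDeg_mulVec hd, sum_heatOp_mulVec hsym hd, hy, zero_div]
  rw [← sub_add_cancel s (piV A), add_dotProduct, hπ, add_zero, add_sub_cancel_right,
    heatOp_eq_half_mul_half, ← mulVec_mulVec, mulVec_mulVec (M := invDeg A),
    invDeg_mul_heatOp hsym, ← mulVec_mulVec, dotProduct_mulVec, vecMul_transpose]

theorem heat_sub_piV (hd : ∀ v, 0 < deg A v) (t : ℝ) (s : V → ℝ) :
    heat A t s - piV A = heatOp A t *ᵥ (s - piV A) := by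
  rw [mulVec_sub, heatOp_mulVec_piV hd]; rfl

theorem invDeg_mulVec_heatOp_mulVec_sub_piV (hd : ∀ v, 0 < deg A v) (t : ℝ) (s : V → ℝ) :
    invDeg A *ᵥ (heatOp A t *ᵥ (s - piV A))
      = fun v => heatDensity A t s v - (∑ u, deg A u)⁻¹ := by
  rw [← heat_sub_piV hd]
  funext v
  simp only [invDeg, mulVec_diagonal, Pi.sub_apply, heatDensity, piV]
  field_simp [(hd v).ne']

theorem sum_deg_mul_heatDensity_sub (hsym : A.IsSymm) (hd : ∀ v, 0 < deg A v) {s : V → ℝ}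
    (hs : ∑ v, s v = 1) (t : ℝ) :
    ∑ v, deg A v * (heatDensity A t s v - (∑ u, deg A u)⁻¹) = 0 := by
  have : Nonempty V := univ_nonempty_iff.1 (nonempty_of_sum_ne_zero (hs ▸ one_ne_zero))
  have hheat : ∑ v, heat A t s v = 1 := (sum_heatOp_mulVec hsym hd t s).trans hs
  have hvol : 0 < ∑ u, deg A u := sum_pos (fun v _ => hd v) univ_nonempty
  simp only [heatDensity, mul_sub, mul_div_cancel₀ _ (hd _).ne', sum_sub_distrib, ← sum_mul,
    hheat, mul_inv_cancel₀ hvol.ne', sub_self]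

theorem heatGap_eq_dotProduct (hd : ∀ v, 0 < deg A v) (s : V → ℝ) (t : ℝ) :
    heatGap A s t = s ⬝ᵥ invDeg A *ᵥ (heatOp A t *ᵥ (s - piV A)) := by
  rw [← heat_sub_piV hd, dotProduct_invDeg_mulVec]; rfl

theorem heatGap_eq (hsym : A.IsSymm) (hd : ∀ v, 0 < deg A v) {s : V → ℝ} (hs : ∑ v, s v = 1)
    (t : ℝ) :
    heatGap A s t = ∑ v, deg A v * (heatDensity A (t / 2) s v - (∑ u, deg A u)⁻¹) ^ 2 := by
  have : Nonempty V := univ_nonempty_iff.1 (nonempty_of_sum_ne_zero (hs ▸ one_ne_zero))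
  have hmean : ∑ v, (s - piV A) v = 0 := by
    simp only [Pi.sub_apply, sum_sub_distrib, hs, sum_piV hd, sub_self]
  rw [heatGap_eq_dotProduct hd, dotProduct_invDeg_heatOp_mulVec hsym hd _ _ hmean,
    dotProduct_invDeg_self hd, invDeg_mulVec_heatOp_mulVec_sub_piV hd]

theorem hasDerivAt_heatGap' (s : V → ℝ) (t : ℝ) :
    HasDerivAt (heatGap A s) (-(s ⬝ᵥ invDeg A *ᵥ (heatOp A t *ᵥ (nlap A *ᵥ s)))) t := by
  have hE := hasDerivAt_pi.1 (hasDerivAt_exp_smul_mulVec (-nlap A) s t)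
  have hsum := HasDerivAt.fun_sum (u := univ) fun v _ =>
    (((hE v).sub_const (piV A v)).const_mul (s v)).div_const (deg A v)
  simp only [smul_neg, neg_mulVec, mulVec_neg, Pi.neg_apply, mul_neg, neg_div,
    sum_neg_distrib] at hsum
  rw [dotProduct_invDeg_mulVec]
  exact hsum

theorem hasDerivAt_heatGap (hsym : A.IsSymm) (hd : ∀ v, 0 < deg A v) (s : V → ℝ) (t : ℝ) :
    HasDerivAt (heatGap A s)
      (-(∑ u, ∑ v, A u v * (heatDensity A (t / 2) s u - heatDensity A (t / 2) s v) ^ 2) / 2) t := by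
  have hLs : nlap A *ᵥ s = nlap A *ᵥ (s - piV A) := by
    rw [mulVec_sub, nlap_mulVec_piV hd, sub_zero]
  have hmean : ∑ v, (nlap A *ᵥ (s - piV A)) v = 0 := by
    rw [← one_dotProduct, dotProduct_mulVec, one_vecMul_nlap hsym hd, zero_dotProduct]
  convert hasDerivAt_heatGap' s t using 1
  rw [hLs, dotProduct_invDeg_heatOp_mulVec hsym hd _ _ hmean, mulVec_mulVec (M := heatOp A _),
    (heatOp_commute_nlap _).eq, ← mulVec_mulVec, dotProduct_invDeg_nlap hsym hd,
    invDeg_mulVec_heatOp_mulVec_sub_piV hd, neg_div]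
  simp only [sub_sub_sub_cancel_right]

end HeatSemigroup

section Cheeger

open MeasureTheory

variable {V : Type} [Fintype V]

noncomputable def vol (A : Matrix V V ℝ) (S : Finset V) : ℝ := ∑ v ∈ S, deg A v

theorem vol_mono {A : Matrix V V ℝ} (hnn : ∀ u v, 0 ≤ A u v) {S T : Finset V} (h : S ⊆ T) :
    vol A S ≤ vol A T :=
  sum_le_sum_of_subset_of_nonneg h fun v _ _ => deg_nonneg hnn v

theorem sum_indicator_Ioc_eq_vol {A : Matrix V V ℝ} (a : V → ℝ) {t : ℝ} (ht : 0 < t) :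
    ∑ v, (Set.Ioc 0 (a v)).indicator (fun _ => deg A v) t
      = vol A (univ.filter fun v => t ≤ a v) := by
  rw [vol, sum_filter]
  exact sum_congr rfl fun v _ => by simp [Set.indicator_apply, ht]

variable [DecidableEq V]

noncomputable def cut (A : Matrix V V ℝ) (S : Finset V) : ℝ := ∑ u ∈ S, ∑ v ∈ Sᶜ, A u v

noncomputable def conductance (A : Matrix V V ℝ) (S : Finset V) : ℝ :=
  cut A S / min (vol A S) (vol A Sᶜ)

def IsSweepSet (x : V → ℝ) (S : Finset V) : Prop :=
  ∃ τ : ℝ, S = univ.filter (fun v => τ ≤ x v) ∨ S = univ.filter (fun v => x v ≤ τ)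

def sweepConductances (A : Matrix V V ℝ) (x : V → ℝ) : Set ℝ :=
  {c | ∃ S, IsSweepSet x S ∧ S.Nonempty ∧ S ≠ univ ∧ c = conductance A S}

variable {A : Matrix V V ℝ}

theorem conductance_nonneg (hnn : ∀ u v, 0 ≤ A u v) (S : Finset V) : 0 ≤ conductance A S :=
  div_nonneg (sum_nonneg fun u _ => sum_nonneg fun v _ => hnn u v)
    (le_min (sum_nonneg fun v _ => deg_nonneg hnn v) (sum_nonneg fun v _ => deg_nonneg hnn v))

theorem sInf_sweepConductances_nonneg (hnn : ∀ u v, 0 ≤ A u v) (x : V → ℝ) :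
    0 ≤ sInf (sweepConductances A x) :=
  Real.sInf_nonneg fun _ ⟨S, _, _, _, hc⟩ => hc ▸ conductance_nonneg hnn S

theorem sInf_sweepConductances_le (hnn : ∀ u v, 0 ≤ A u v) {x : V → ℝ} {S : Finset V}
    (hS : IsSweepSet x S) (hne : S.Nonempty) (hne_univ : S ≠ univ) :
    sInf (sweepConductances A x) ≤ conductance A S :=
  csInf_le ⟨0, fun _ ⟨T, _, _, _, hc⟩ => hc ▸ conductance_nonneg hnn T⟩ ⟨S, hS, hne, hne_univ, rfl⟩

theorem mul_vol_le_cut (hd : ∀ v, 0 < deg A v) {x : V → ℝ} {κ : ℝ}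
    (hκ : ∀ S, IsSweepSet x S → S.Nonempty → S ≠ univ → κ ≤ conductance A S)
    {S : Finset V} (hS : IsSweepSet x S) (hhalf : 2 * vol A S ≤ vol A univ) :
    κ * vol A S ≤ cut A S := by
  rcases S.eq_empty_or_nonempty with rfl | hne
  · simp [vol, cut]
  have hpos : 0 < vol A S := sum_pos (fun v _ => hd v) hne
  have hsplit : vol A S + vol A Sᶜ = vol A univ := sum_add_sum_compl S _
  have hne_univ : S ≠ univ := by
    rintro rfl
    linarith
  have h := hκ S hS hne hne_univ
  rwa [conductance, min_eq_left (by linarith), le_div_iff₀ hpos] at h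

theorem sum_indicator_Ioc_eq_cut (a : V → ℝ) (t : ℝ) :
    ∑ u, ∑ v, (Set.Ioc (a v) (a u)).indicator (fun _ => A u v) t
      = cut A (univ.filter fun v => t ≤ a v) := by
  rw [cut, compl_filter, sum_filter]
  refine sum_congr rfl fun u _ => ?_
  rw [sum_filter]
  split_ifs with hu
  · exact sum_congr rfl fun v _ => by simp [Set.indicator_apply, hu]
  · exact sum_eq_zero fun v _ => by simp [hu]

/-- The coarea formula: integrating over `t > 0`, the left side is `κ ∫ vol {a ≥ t}` and the
right side is `∫ cut {a ≥ t}`. -/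
theorem mul_sum_deg_le_of_level_sets {a : V → ℝ} (ha : ∀ v, 0 ≤ a v) {κ : ℝ}
    (hcut : ∀ t > 0, κ * vol A (univ.filter fun v => t ≤ a v)
      ≤ cut A (univ.filter fun v => t ≤ a v)) :
    κ * ∑ v, deg A v * a v ≤ ∑ u, ∑ v, A u v * max (a u - a v) 0 := by
  have hvol : ∫ t in Set.Ioi 0, κ * ∑ v, (Set.Ioc 0 (a v)).indicator (fun _ => deg A v) t
      = κ * ∑ v, deg A v * a v := by
    rw [integral_const_mul, integral_finsetSum _ fun v _ => integrableOn_indicator_Ioc _ _ _]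
    simp only [setIntegral_Ioi_indicator_Ioc le_rfl, sub_zero, max_eq_left (ha _), mul_comm]
  have hcut' : ∫ t in Set.Ioi 0, ∑ u, ∑ v, (Set.Ioc (a v) (a u)).indicator (fun _ => A u v) t
      = ∑ u, ∑ v, A u v * max (a u - a v) 0 := by
    rw [integral_finsetSum _ fun u _ => integrable_finsetSum _ fun v _ =>
      integrableOn_indicator_Ioc (a u) (a v) (A u v)]
    refine sum_congr rfl fun u _ => ?_
    rw [integral_finsetSum _ fun v _ => integrableOn_indicator_Ioc _ _ _]
    simp only [setIntegral_Ioi_indicator_Ioc (ha _), mul_comm]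
  rw [← hvol, ← hcut']
  refine setIntegral_mono_on ((integrable_finsetSum _ fun v _ =>
    integrableOn_indicator_Ioc _ _ _).const_mul κ) (integrable_finsetSum _ fun u _ =>
      integrable_finsetSum _ fun v _ => integrableOn_indicator_Ioc _ _ _) measurableSet_Ioi
    fun t ht => ?_
  rw [sum_indicator_Ioc_eq_vol a ht, sum_indicator_Ioc_eq_cut]
  exact hcut t ht

theorem sq_mul_sum_deg_le_of_level_sets (hsym : A.IsSymm) (hnn : ∀ u v, 0 ≤ A u v)
    {ψ : V → ℝ} {κ : ℝ} (hκ : 0 ≤ κ)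
    (hcut : ∀ t > 0, κ * vol A (univ.filter fun v => t ≤ ψ v ^ 2)
      ≤ cut A (univ.filter fun v => t ≤ ψ v ^ 2)) :
    κ ^ 2 * ∑ v, deg A v * ψ v ^ 2 ≤ ∑ u, ∑ v, A u v * (ψ u - ψ v) ^ 2 := by
  set Q := ∑ v, deg A v * ψ v ^ 2
  set E := ∑ u, ∑ v, A u v * (ψ u - ψ v) ^ 2
  have hcoarea : 2 * (κ * Q) ≤ ∑ u, ∑ v, A u v * |ψ u ^ 2 - ψ v ^ 2| := by
    rw [← two_mul_sum_max_sub hsym]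
    linarith [mul_sum_deg_le_of_level_sets (fun v => sq_nonneg (ψ v)) hcut]
  have hCS := sq_sum_sum_le_mul hnn (fun u v => |ψ u ^ 2 - ψ v ^ 2|)
    (fun u v => (ψ u - ψ v) ^ 2) (fun u v => (ψ u + ψ v) ^ 2)
    (fun _ _ => sq_nonneg _) (fun _ _ => sq_nonneg _)
    (fun u v => le_of_eq (by rw [sq_abs]; ring))
  have hplus : ∑ u, ∑ v, A u v * (ψ u + ψ v) ^ 2 ≤ 4 * Q := by
    have h : ∀ u v, A u v * (ψ u + ψ v) ^ 2 ≤ 2 * (A u v * ψ u ^ 2) + 2 * (A u v * ψ v ^ 2) :=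
      fun u v => by nlinarith [hnn u v, mul_nonneg (hnn u v) (sq_nonneg (ψ u - ψ v))]
    calc _ ≤ ∑ u, ∑ v, (2 * (A u v * ψ u ^ 2) + 2 * (A u v * ψ v ^ 2)) :=
          sum_le_sum fun u _ => sum_le_sum fun v _ => h u v
      _ = 4 * Q := by
          simp only [sum_add_distrib, ← mul_sum, sum_sum_mul_left, sum_sum_mul_right hsym]
          ring
  have hE : 0 ≤ E := sum_nonneg fun u _ => sum_nonneg fun v _ =>
    mul_nonneg (hnn u v) (sq_nonneg _)
  have hQ : 0 ≤ Q := sum_nonneg fun v _ => mul_nonneg (deg_nonneg hnn v) (sq_nonneg _)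
  have : (2 * (κ * Q)) ^ 2 ≤ E * (4 * Q) :=
    (pow_le_pow_left₀ (by positivity) hcoarea 2).trans
      (hCS.trans (mul_le_mul_of_nonneg_left hplus hE))
  rcases hQ.eq_or_lt with hQ0 | hQpos
  · rw [← hQ0, mul_zero]; exact hE
  · nlinarith

theorem cheeger_sweep (hsym : A.IsSymm) (hnn : ∀ u v, 0 ≤ A u v) (hd : ∀ v, 0 < deg A v)
    {x : V → ℝ} {κ : ℝ} (hκ : 0 ≤ κ)
    (hκS : ∀ S, IsSweepSet x S → S.Nonempty → S ≠ univ → κ ≤ conductance A S)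
    {b : ℝ} (hb : ∑ v, deg A v * (x v - b) = 0) :
    κ ^ 2 * ∑ v, deg A v * (x v - b) ^ 2 ≤ ∑ u, ∑ v, A u v * (x u - x v) ^ 2 := by
  obtain ⟨c, hup, hdown⟩ := exists_weighted_median (deg A) x (deg_nonneg hnn)
  have hpos := sq_mul_sum_deg_le_of_level_sets hsym hnn (ψ := fun v => max (x v - c) 0) hκ
    fun t ht => by
      have hlevel : univ.filter (fun v => t ≤ max (x v - c) 0 ^ 2)
          = univ.filter (fun v => c + √t ≤ x v) := by
        ext v; simp only [mem_filter, mem_univ, true_and, le_sq_max_iff ht, le_sub_iff_add_le']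
      rw [hlevel]
      refine mul_vol_le_cut hd hκS ⟨_, Or.inl rfl⟩ (le_trans ?_ hup)
      exact mul_le_mul_of_nonneg_left (vol_mono hnn fun v hv => by
        simp only [mem_filter, mem_univ, true_and] at hv ⊢
        linarith [Real.sqrt_pos.2 ht]) two_pos.le
  have hneg := sq_mul_sum_deg_le_of_level_sets hsym hnn (ψ := fun v => max (-(x v - c)) 0) hκ
    fun t ht => by
      have hlevel : univ.filter (fun v => t ≤ max (-(x v - c)) 0 ^ 2)
          = univ.filter (fun v => x v ≤ c - √t) := by
        ext v; simp only [mem_filter, mem_univ, true_and, le_sq_max_iff ht, neg_sub, le_sub_comm]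
      rw [hlevel]
      refine mul_vol_le_cut hd hκS ⟨_, Or.inr rfl⟩ (le_trans ?_ hdown)
      exact mul_le_mul_of_nonneg_left (vol_mono hnn fun v hv => by
        simp only [mem_filter, mem_univ, true_and] at hv ⊢
        linarith [Real.sqrt_pos.2 ht]) two_pos.le
  have hshift : ∑ v, deg A v * (x v - b) ^ 2 ≤ ∑ v, deg A v * (x v - c) ^ 2 := by
    have h : ∀ v, deg A v * (x v - c) ^ 2
        = deg A v * (x v - b) ^ 2 + 2 * (b - c) * (deg A v * (x v - b)) + (b - c) ^ 2 * deg A v :=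
      fun v => by ring
    simp only [h, sum_add_distrib, ← mul_sum, hb, mul_zero, add_zero]
    nlinarith [sum_nonneg fun v (_ : v ∈ univ) => deg_nonneg hnn v, sq_nonneg (b - c)]
  have hsplit : ∑ v, deg A v * (x v - c) ^ 2
      = ∑ v, deg A v * max (x v - c) 0 ^ 2 + ∑ v, deg A v * max (-(x v - c)) 0 ^ 2 := by
    simp only [← sum_add_distrib, ← mul_add, sq_max_add_sq_max_neg]
  have henergy : ∑ u, ∑ v, A u v * (max (x u - c) 0 - max (x v - c) 0) ^ 2
      + ∑ u, ∑ v, A u v * (max (-(x u - c)) 0 - max (-(x v - c)) 0) ^ 2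
      ≤ ∑ u, ∑ v, A u v * (x u - x v) ^ 2 := by
    simp only [← sum_add_distrib, ← mul_add]
    refine sum_le_sum fun u _ => sum_le_sum fun v _ => mul_le_mul_of_nonneg_left ?_ (hnn u v)
    simpa using sq_max_sub_max_add_sq_max_sub_max_le (x u - c) (x v - c)
  calc κ ^ 2 * ∑ v, deg A v * (x v - b) ^ 2
      ≤ κ ^ 2 * ∑ v, deg A v * (x v - c) ^ 2 := mul_le_mul_of_nonneg_left hshift (sq_nonneg κ)
    _ ≤ _ := by rw [hsplit, mul_add]; exact add_le_add hpos hneg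
    _ ≤ _ := henergy

end Cheeger

theorem neg_log_deriv_ge_kappa_sq_half_general {V : Type} [Fintype V] [DecidableEq V]
    (A : Matrix V V ℝ) (hsym : A.IsSymm) (hnn : ∀ u v, 0 ≤ A u v)
    (hd : ∀ v, 0 < deg A v) (s : V → ℝ) (hs : ∑ v, s v = 1) (Δ : ℝ)
    (hf : 0 < ∑ v, s v * (heat A Δ s v - piV A v) / deg A v) :
    let μ : V → ℝ := fun v => heat A (Δ/2) s v / deg A v
    let κ : ℝ := sInf {c | ∃ S : Finset V,
      (∃ τ : ℝ, S = Finset.univ.filter (fun v => τ ≤ μ v) ∨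
                S = Finset.univ.filter (fun v => μ v ≤ τ)) ∧
      S.Nonempty ∧ S ≠ Finset.univ ∧
      c = (∑ u ∈ S, ∑ u' ∈ Sᶜ, A u u')
            / min (∑ v ∈ S, deg A v) (∑ v ∈ Sᶜ, deg A v)}
    κ ^ 2 / 2 ≤
      - deriv (fun Δ' => Real.log (∑ v, s v * (heat A Δ' s v - piV A v) / deg A v)) Δ := by
  intro μ κ
  have hcheeger := cheeger_sweep hsym hnn hd (x := heatDensity A (Δ / 2) s) (κ := κ)
    (sInf_sweepConductances_nonneg hnn μ) (fun S => sInf_sweepConductances_le hnn)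
    (sum_deg_mul_heatDensity_sub hsym hd hs (Δ / 2))
  change 0 < heatGap A s Δ at hf
  change _ ≤ -deriv (fun t => Real.log (heatGap A s t)) Δ
  rw [((hasDerivAt_heatGap hsym hd s Δ).log hf.ne').deriv, neg_div, neg_div, neg_neg,
    le_div_iff₀ hf, heatGap_eq hsym hd hs]
  linarith

/-- Lemma 4.5: the negated logarithmic derivative of
`f(Δ) = sᵀ D⁻¹ (e^{−Δ𝓛} s − π)` is at least `κ²/2`, where `κ` is the minimum
conductance of a nontrivial sweep set of `μ = D⁻¹ e^{−(Δ/2)𝓛} s`. -/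
theorem neg_log_deriv_ge_kappa_sq_half {V : Type} [Fintype V] [DecidableEq V]
    (A : Matrix V V ℝ) (hsym : A.IsSymm) (hnn : ∀ u v, 0 ≤ A u v)
    (hd : ∀ v, 0 < deg A v) (s : V → ℝ) (hs : ∑ v, s v = 1) (Δ : ℝ) (hΔ : 0 ≤ Δ)
    (hf : 0 < ∑ v, s v * (heat A Δ s v - piV A v) / deg A v) :
    let μ : V → ℝ := fun v => heat A (Δ/2) s v / deg A v
    let κ : ℝ := sInf {c | ∃ S : Finset V,
      (∃ τ : ℝ, S = Finset.univ.filter (fun v => τ ≤ μ v) ∨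
                S = Finset.univ.filter (fun v => μ v ≤ τ)) ∧
      S.Nonempty ∧ S ≠ Finset.univ ∧
      c = (∑ u ∈ S, ∑ u' ∈ Sᶜ, A u u')
            / min (∑ v ∈ S, deg A v) (∑ v ∈ Sᶜ, deg A v)}
    κ ^ 2 / 2 ≤
      - deriv (fun Δ' => Real.log (∑ v, s v * (heat A Δ' s v - piV A v) / deg A v)) Δ :=
  neg_log_deriv_ge_kappa_sq_half_general A hsym hnn hd s hs Δ hf

end GraphHeat
end
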